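/- Let p be a prime and m ∈ ℕ. For all natural numbers r' ≤ r, the element ⟨p^m r choose p^m r'⟩_{(m),q} of ℚ(q) is a unit in the subring ℤ[q]_{(p,q−1)}. -/

import Mathlib

noncomputable section

open Polynomial

/-- `ℤ[q]`, the polynomial ring in one variable `q` over `ℤ`. -/
abbrev Zq : Type := Polynomial ℤ

/-- `ℚ(q)`, realized as the fraction field of `ℤ[q]`. -/
abbrev Qq : Type := FractionRing Zq

/-- The canonical embedding `ℤ[q] → ℚ(q)`. -/
def ι : Zq →+* Qq := algebraMap Zq Qq

/-- The image of the variable `q` in `ℚ(q)`. -/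
def qQ : Qq := ι X

/-- The `q^a`-integer `(n)_{q^a} = 1 + q^a + ⋯ + q^{a(n-1)}` in `ℤ[q]`. -/
def qInt (a n : ℕ) : Zq := ∑ j ∈ Finset.range n, X ^ (a * j)

/-- The `q^a`-factorial `(n)_{q^a}! = ∏_{i=1}^{n} (i)_{q^a}` in `ℤ[q]`. -/
def qFact (a n : ℕ) : Zq := ∏ i ∈ Finset.range n, qInt a (i + 1)

/-- The prime ideal `(p, q - 1)` of `ℤ[q]`. -/
def pqIdeal (p : ℕ) : Ideal Zq := Ideal.span {C (p : ℤ), X - 1}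

/-- Membership in the localization `ℤ[q]_{(p,q-1)}`, viewed inside `ℚ(q)`:
`x = a / b` with `b ∉ (p, q-1)`. -/
def InLoc (p : ℕ) (x : Qq) : Prop :=
  ∃ a b : Zq, b ∉ pqIdeal p ∧ x * ι b = ι a

/-- Being a unit of the localization `ℤ[q]_{(p,q-1)}`, viewed inside `ℚ(q)`:
`x = a / b` with `a, b ∉ (p, q-1)`. -/
def IsLocUnit (p : ℕ) (x : Qq) : Prop :=
  ∃ a b : Zq, a ∉ pqIdeal p ∧ b ∉ pqIdeal p ∧ x * ι b = ι a

/-- The Gaussian `q`-binomial coefficient `(k choose k')_q` as an element of `ℚ(q)`. -/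
def qBinomF (k k' : ℕ) : Qq :=
  ι (qFact 1 k) / (ι (qFact 1 k') * ι (qFact 1 (k - k')))

/-- The level-`m` coefficient `{k choose k'}_{(m),q}` as an element of `ℚ(q)`. -/
def braceC (p m k k' : ℕ) : Qq :=
  ι (qFact (p ^ m) (k / p ^ m)) /
    (ι (qFact (p ^ m) (k' / p ^ m)) * ι (qFact (p ^ m) ((k - k') / p ^ m)))

/-- The level-`m` coefficient `⟨k choose k'⟩_{(m),q}` as an element of `ℚ(q)`. -/
def angleC (p m k k' : ℕ) : Qq := qBinomF k k' * (braceC p m k k')⁻¹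

/-! Every `q`-integer `(k)_q` factors as `(k/d)_{q^d} (d)_q` whenever `d ∣ k`. Applying this
with `d = p^m` to the multiples of `p^m`, and with `d = p^{v_p(k)}` to the other `k`, gives
`(p^m r)_q! = (r)_{q^{p^m}}! · c^r · N_r`: since `v_p(p^m j + t) = v_p(t)` for `0 < t < p^m`,
the factors `(p^{v_p(k)})_q` repeat with period `p^m` and collect into `c^r`, while `N_r` is a
product of `q`-integers `(u)_{q^{p^v}}` with `p ∤ u`. Hence
`⟨p^m r choose p^m r'⟩ = N_r / (N_{r'} N_{r-r'})`, and each `(u)_{q^{p^v}}` evaluates to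
`u ≢ 0 (mod p)` at `q = 1`, so lies outside `(p, q-1)`. -/

lemma qInt_eval_one (a n : ℕ) : (qInt a n).eval 1 = n := by
  simp [qInt, eval_finsetSum]

lemma qInt_ne_zero (a : ℕ) {n : ℕ} (hn : n ≠ 0) : qInt a n ≠ 0 := fun h => by
  have h₁ := qInt_eval_one a n
  rw [h, eval_zero] at h₁
  exact hn (by exact_mod_cast h₁.symm)

lemma qFact_ne_zero (a n : ℕ) : qFact a n ≠ 0 :=
  Finset.prod_ne_zero_iff.mpr fun i _ => qInt_ne_zero a i.succ_ne_zero

lemma qInt_mul (a b c : ℕ) : qInt a (b * c) = qInt (a * b) c * qInt a b := by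
  induction c with
  | zero => simp [qInt]
  | succ c ih =>
    have hsucc : qInt (a * b) (c + 1) = qInt (a * b) c + X ^ (a * b * c) :=
      Finset.sum_range_succ _ _
    rw [hsucc, add_mul, ← ih, Nat.mul_succ]
    simp only [qInt, Finset.sum_range_add, Finset.mul_sum]
    congr 1
    refine Finset.sum_congr rfl fun j _ => ?_
    rw [← pow_add]
    ring_nf

lemma qInt_one_of_dvd {d n : ℕ} (h : d ∣ n) : qInt 1 n = qInt d (n / d) * qInt 1 d := by
  conv_lhs => rw [← Nat.mul_div_cancel' h]
  rw [qInt_mul, one_mul]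

lemma qFact_succ (a n : ℕ) : qFact a (n + 1) = qFact a n * qInt a (n + 1) :=
  Finset.prod_range_succ _ _

lemma qFact_add (a n k : ℕ) :
    qFact a (n + k) = qFact a n * ∏ t ∈ Finset.range k, qInt a (n + t + 1) := by
  simp only [qFact, Finset.prod_range_add, add_assoc]

def evalOneModP (p : ℕ) : Zq →+* ZMod p := (Int.castRingHom (ZMod p)).comp (evalRingHom 1)

lemma pqIdeal_le_ker (p : ℕ) : pqIdeal p ≤ RingHom.ker (evalOneModP p) := by
  rw [pqIdeal, Ideal.span_le, Set.insert_subset_iff, Set.singleton_subset_iff]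
  simp [evalOneModP]

lemma notMem_pqIdeal_of_evalOneModP_ne_zero {p : ℕ} {x : Zq} (hx : evalOneModP p x ≠ 0) :
    x ∉ pqIdeal p :=
  fun h => hx (pqIdeal_le_ker p h)

lemma evalOneModP_qInt (p a n : ℕ) : evalOneModP p (qInt a n) = n := by
  simp [evalOneModP, qInt_eval_one]

lemma not_dvd_add_div_ordProj {p a n : ℕ} (hp : p.Prime) (hn : n ≠ 0)
    (ha : p ^ (n.factorization p + 1) ∣ a) : ¬ p ∣ (a + n) / p ^ n.factorization p := by
  have hdvd : p ^ n.factorization p ∣ a + n :=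
    dvd_add ((pow_dvd_pow p (Nat.le_succ _)).trans ha) (Nat.ordProj_dvd n p)
  rw [Nat.dvd_div_iff_mul_dvd hdvd, ← pow_succ, Nat.dvd_add_right ha]
  exact Nat.pow_succ_factorization_not_dvd hn hp

def unitFactor (p m j t : ℕ) : Zq :=
  qInt (p ^ (t + 1).factorization p) ((p ^ m * j + (t + 1)) / p ^ (t + 1).factorization p)

def unitPart (p m r : ℕ) : Zq :=
  ∏ j ∈ Finset.range r, ∏ t ∈ Finset.range (p ^ m - 1), unitFactor p m j t

def blockConst (p m : ℕ) : Zq :=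
  qInt 1 (p ^ m) * ∏ t ∈ Finset.range (p ^ m - 1), qInt 1 (p ^ (t + 1).factorization p)

lemma unitPart_succ (p m r : ℕ) :
    unitPart p m (r + 1) = unitPart p m r * ∏ t ∈ Finset.range (p ^ m - 1), unitFactor p m r t :=
  Finset.prod_range_succ _ _

lemma factorization_lt_of_lt_pow {p m t : ℕ} (hp : p.Prime) (ht : t + 1 < p ^ m) :
    (t + 1).factorization p < m :=
  (Nat.pow_lt_pow_iff_right hp.one_lt).mp ((Nat.ordProj_le p t.succ_ne_zero).trans_lt ht)

lemma qInt_eq_unitFactor_mul {p m j t : ℕ} (hp : p.Prime) (ht : t + 1 < p ^ m) :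
    qInt 1 (p ^ m * j + (t + 1)) = unitFactor p m j t * qInt 1 (p ^ (t + 1).factorization p) :=
  qInt_one_of_dvd <| dvd_add
    (dvd_mul_of_dvd_left (pow_dvd_pow p (factorization_lt_of_lt_pow hp ht).le) j)
    (Nat.ordProj_dvd _ p)

lemma evalOneModP_unitFactor_ne_zero {p m j t : ℕ} (hp : p.Prime) (ht : t + 1 < p ^ m) :
    evalOneModP p (unitFactor p m j t) ≠ 0 := by
  have : NeZero p := ⟨hp.ne_zero⟩
  rw [unitFactor, evalOneModP_qInt, Ne, ZMod.natCast_eq_zero_iff]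
  exact not_dvd_add_div_ordProj hp t.succ_ne_zero <|
    dvd_mul_of_dvd_left (pow_dvd_pow p (factorization_lt_of_lt_pow hp ht)) j

lemma evalOneModP_unitPart_ne_zero {p : ℕ} (hp : p.Prime) (m r : ℕ) :
    evalOneModP p (unitPart p m r) ≠ 0 := by
  have : Fact p.Prime := ⟨hp⟩
  simp only [unitPart, map_prod, Finset.prod_ne_zero_iff, Finset.mem_range]
  intro j _ t ht
  exact evalOneModP_unitFactor_ne_zero hp (by omega)

lemma prod_qInt_block {p : ℕ} (hp : p.Prime) (m j : ℕ) :
    ∏ t ∈ Finset.range (p ^ m), qInt 1 (p ^ m * j + t + 1) =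
      qInt (p ^ m) (j + 1) * blockConst p m *
        ∏ t ∈ Finset.range (p ^ m - 1), unitFactor p m j t := by
  have hpos : 0 < p ^ m := pow_pos hp.pos m
  have hlast : p ^ m * j + (p ^ m - 1) + 1 = p ^ m * (j + 1) := by
    rw [Nat.mul_succ]; omega
  have hbody : ∏ t ∈ Finset.range (p ^ m - 1), qInt 1 (p ^ m * j + t + 1) =
      ∏ t ∈ Finset.range (p ^ m - 1),
        unitFactor p m j t * qInt 1 (p ^ (t + 1).factorization p) :=
    Finset.prod_congr rfl fun t ht =>
      qInt_eq_unitFactor_mul hp (by rw [Finset.mem_range] at ht; omega)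
  rw [← Nat.sub_add_cancel hpos, Finset.prod_range_succ, Nat.sub_add_cancel hpos, hlast,
    qInt_one_of_dvd (dvd_mul_right _ _), Nat.mul_div_cancel_left _ hpos, hbody,
    Finset.prod_mul_distrib, blockConst]
  ring

lemma qFact_one_pow_mul {p : ℕ} (hp : p.Prime) (m r : ℕ) :
    qFact 1 (p ^ m * r) = qFact (p ^ m) r * blockConst p m ^ r * unitPart p m r := by
  induction r with
  | zero => simp [qFact, unitPart]
  | succ r ih =>
    rw [Nat.mul_succ, qFact_add, ih, prod_qInt_block hp, qFact_succ, unitPart_succ]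
    ring

lemma angleC_mul_unitPart {p : ℕ} (hp : p.Prime) (m r d : ℕ) :
    angleC p m (p ^ m * (r + d)) (p ^ m * r) * ι (unitPart p m r * unitPart p m d) =
      ι (unitPart p m (r + d)) := by
  have hpos : 0 < p ^ m := pow_pos hp.pos m
  have hι (a n : ℕ) : ι (qFact a n) ≠ 0 :=
    (map_ne_zero_iff ι (IsFractionRing.injective Zq Qq)).mpr (qFact_ne_zero a n)
  have := hι (p ^ m) (r + d)
  have := hι (p ^ m) r
  have := hι (p ^ m) d
  have := hι 1 (p ^ m * r)
  have := hι 1 (p ^ m * d)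
  rw [angleC, qBinomF, braceC, ← Nat.mul_sub, Nat.add_sub_cancel_left,
    Nat.mul_div_cancel_left _ hpos, Nat.mul_div_cancel_left _ hpos,
    Nat.mul_div_cancel_left _ hpos]
  field_simp
  simp only [← map_mul]
  congr 1
  rw [qFact_one_pow_mul hp, qFact_one_pow_mul hp, qFact_one_pow_mul hp, pow_add]
  ring

/-- For `r' ≤ r`, the element `⟨p^m r choose p^m r'⟩_{(m),q}` is a unit of
`ℤ[q]_{(p,q-1)}`. -/
theorem stmt13 (p : ℕ) (hp : p.Prime) (m r r' : ℕ) (h : r' ≤ r) :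
    IsLocUnit p (angleC p m (p ^ m * r) (p ^ m * r')) := by
  obtain ⟨d, rfl⟩ := Nat.exists_eq_add_of_le h
  refine ⟨unitPart p m (r' + d), unitPart p m r' * unitPart p m d,
    notMem_pqIdeal_of_evalOneModP_ne_zero (evalOneModP_unitPart_ne_zero hp m _),
    notMem_pqIdeal_of_evalOneModP_ne_zero ?_, angleC_mul_unitPart hp m r' d⟩
  have : Fact p.Prime := ⟨hp⟩
  rw [map_mul]
  exact mul_ne_zero (evalOneModP_unitPart_ne_zero hp m r') (evalOneModP_unitPart_ne_zero hp m d)
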